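/- Let A₀, …, A_r ∈ ℝ^{p×n} with r ≥ r* ≥ 1, suppose O_{r*} = [A₀; …; A_{r*}] has full column rank while O_{r*−1} = [A₀; …; A_{r*−1}] does not, and let W(T) be the corresponding order-r STLOG. Then there exist constants 0 < C₁ ≤ C₂ (independent of T) such that C₁ T^{2r*+1} ≤ λ_min(W(T)) ≤ C₂ T^{2r*+1} for all sufficiently small T > 0. -/

import Mathlib

/-!
With `e_k = A_k w` and `aₓ,ᵢ = Tⁱ/i! · (e_i)ₓ` one has `wᵀ W(T) w = T ∑ₓ aₓᵀ H aₓ`, where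
`H = (1/(i+j+1))` is the Hilbert matrix, the Gram matrix of the monomials in `L²[0,1]` and hence
positive definite. For `T ≤ 1` this gives
`wᵀ W(T) w ≥ μ T (T^{r*}/r*!)² ∑_{k ≤ r*} |e_k|² ≥ μ c T^{2r*+1} / r*!²`,
where `c > 0` bounds `|O_{r*} w|²` from below on unit vectors. Conversely, for a unit vector
`u ∈ ker O_{r*-1}` the terms of `uᵀ W(T) u` with `i < r*` or `j < r*` vanish, and the others carry
a power `T^{i+j+1}` with `i + j + 1 ≥ 2r* + 1`.
-/

open Matrix

/-- Minimum eigenvalue of a symmetric matrix, characterized as the minimum of the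
quadratic form over unit vectors. -/
noncomputable def lambdaMin {n : Type*} [Fintype n] (W : Matrix n n ℝ) : ℝ :=
  sInf {x | ∃ v : n → ℝ, (∑ i, v i ^ 2) = 1 ∧ x = v ⬝ᵥ W.mulVec v}

open Finset
open scoped Nat

theorem Matrix.ker_mulVecLin_eq_bot_iff_rank_eq_card {K m n : Type*} [Field K] [Fintype n]
    (M : Matrix m n K) :
    LinearMap.ker M.mulVecLin = ⊥ ↔ M.rank = Fintype.card n := by
  have h := LinearMap.finrank_range_add_finrank_ker M.mulVecLin
  rw [Module.finrank_fintype_fun_eq_card, ← Matrix.rank] at h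
  rw [← Submodule.finrank_eq_zero]
  omega

theorem sum_sq_eq_norm_toLp_sq {m : Type*} [Fintype m] (v : m → ℝ) :
    ∑ i, v i ^ 2 = ‖WithLp.toLp 2 v‖ ^ 2 := by
  simp [EuclideanSpace.norm_sq_eq]

theorem exists_sum_sq_smul_eq_one {m : Type*} [Fintype m] {v : m → ℝ} (hv : v ≠ 0) :
    ∃ c : ℝ, ∑ i, (c • v) i ^ 2 = 1 := by
  have hpos : 0 < ‖WithLp.toLp 2 v‖ := by simpa using hv
  refine ⟨‖WithLp.toLp 2 v‖⁻¹, ?_⟩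
  rw [sum_sq_eq_norm_toLp_sq, WithLp.toLp_smul, norm_smul, norm_inv, norm_norm,
    inv_mul_cancel₀ hpos.ne', one_pow]

theorem exists_pos_mul_sum_sq_le {m : Type*} [Fintype m] (q : (m → ℝ) → ℝ) (hq : Continuous q)
    (hsmul : ∀ (c : ℝ) v, q (c • v) = c ^ 2 * q v) (hpos : ∀ v ≠ 0, 0 < q v) :
    ∃ μ > 0, ∀ v, μ * ∑ i, v i ^ 2 ≤ q v := by
  set S := Metric.sphere (0 : EuclideanSpace ℝ m) 1
  have hqS : ∃ μ > 0, ∀ x ∈ S, μ ≤ q x.ofLp := by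
    rcases S.eq_empty_or_nonempty with hS | hS
    · exact ⟨1, one_pos, by simp [hS]⟩
    obtain ⟨x₀, hx₀, hmin⟩ := (isCompact_sphere _ _).exists_isMinOn hS
      (hq.comp (PiLp.continuous_ofLp 2 _)).continuousOn
    refine ⟨q x₀.ofLp, hpos _ fun h => ?_, fun x hx => hmin hx⟩
    rw [WithLp.ofLp_eq_zero] at h
    simp [h] at hx₀
  obtain ⟨μ, hμ, hμS⟩ := hqS
  refine ⟨μ, hμ, fun v => ?_⟩
  rcases eq_or_ne v 0 with rfl | hv
  · simp [show q 0 = 0 by simpa using hsmul 0 0]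
  set t := ‖WithLp.toLp 2 v‖
  have ht : 0 < t := by simpa [t] using hv
  have hu : t⁻¹ • WithLp.toLp 2 v ∈ S := by
    simp [S, norm_smul, t, inv_mul_cancel₀ ht.ne']
  calc μ * ∑ i, v i ^ 2 = t ^ 2 * μ := by rw [sum_sq_eq_norm_toLp_sq, mul_comm]
    _ ≤ t ^ 2 * q (t⁻¹ • v) := by gcongr; simpa using hμS _ hu
    _ = q v := by rw [hsmul, ← mul_assoc, ← mul_pow, mul_inv_cancel₀ ht.ne', one_pow, one_mul]

theorem lambdaMin_bounds {m : Type*} [Fintype m] {W : Matrix m m ℝ} {c : ℝ}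
    (hc : ∀ v : m → ℝ, ∑ i, v i ^ 2 = 1 → c ≤ v ⬝ᵥ W *ᵥ v) {u : m → ℝ}
    (hu : ∑ i, u i ^ 2 = 1) :
    c ≤ lambdaMin W ∧ lambdaMin W ≤ u ⬝ᵥ W *ᵥ u :=
  ⟨le_csInf ⟨_, u, hu, rfl⟩ (by rintro _ ⟨v, hv, rfl⟩; exact hc v hv),
    csInf_le ⟨c, by rintro _ ⟨v, hv, rfl⟩; exact hc v hv⟩ ⟨u, hu, rfl⟩⟩

theorem Matrix.exists_pos_mul_sum_sq_le_sum_sq_mulVec {m n : Type*} [Fintype m] [Fintype n]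
    {M : Matrix m n ℝ} (hM : ∀ v, M *ᵥ v = 0 → v = 0) :
    ∃ c > 0, ∀ v, c * ∑ i, v i ^ 2 ≤ ∑ k, (M *ᵥ v) k ^ 2 :=
  exists_pos_mul_sum_sq_le _ (by fun_prop)
    (fun c v => by simp only [mulVec_smul, Pi.smul_apply, smul_eq_mul, mul_pow, mul_sum])
    (fun v hv => by
      rw [sum_sq_eq_norm_toLp_sq]
      exact pow_pos (norm_pos_iff.2 (by simpa using mt (hM v) hv)) 2)

theorem exists_pos_mul_sum_sq_le_sum_of_stack_rank_eq {ι κ : Type*} [Fintype ι] [Fintype κ]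
    {N : ℕ} {A : ℕ → Matrix ι κ ℝ} {O : Matrix (Fin N × ι) κ ℝ}
    (hO : ∀ k i j, O (k, i) j = A k i j) (hrank : O.rank = Fintype.card κ) :
    ∃ c > 0, ∀ v, c * ∑ i, v i ^ 2 ≤ ∑ k ∈ range N, A k *ᵥ v ⬝ᵥ A k *ᵥ v := by
  have hO_sq (v : κ → ℝ) : ∑ k, (O *ᵥ v) k ^ 2 = ∑ k ∈ range N, A k *ᵥ v ⬝ᵥ A k *ᵥ v := by
    rw [Fintype.sum_prod_type, ← Fin.sum_univ_eq_sum_range]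
    simp [mulVec, dotProduct, hO, sq]
  simp_rw [← hO_sq]
  exact O.exists_pos_mul_sum_sq_le_sum_sq_mulVec
    (by rw [← ker_mulVecLin_eq_bot_iff, ker_mulVecLin_eq_bot_iff_rank_eq_card, hrank])

theorem exists_sum_sq_eq_one_and_mulVec_eq_zero_of_stack_rank_ne {ι κ : Type*} [Fintype ι]
    [Fintype κ] {N : ℕ} {A : ℕ → Matrix ι κ ℝ} {O : Matrix (Fin N × ι) κ ℝ}
    (hO : ∀ k i j, O (k, i) j = A k i j) (hrank : O.rank ≠ Fintype.card κ) :
    ∃ u : κ → ℝ, ∑ i, u i ^ 2 = 1 ∧ ∀ k < N, A k *ᵥ u = 0 := by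
  obtain ⟨v, hv, hv0⟩ := Submodule.exists_mem_ne_zero_of_ne_bot (p := LinearMap.ker O.mulVecLin)
    (by rwa [Ne, ker_mulVecLin_eq_bot_iff_rank_eq_card])
  obtain ⟨t, ht⟩ := exists_sum_sq_smul_eq_one hv0
  refine ⟨t • v, ht, fun k hk => ?_⟩
  rw [mulVec_smul, smul_eq_zero]
  refine Or.inr (funext fun x => ?_)
  simpa [mulVec, dotProduct, hO] using congrFun hv (⟨k, hk⟩, x)

theorem integral_sq_sum_mul_pow {m : ℕ} (a : Fin m → ℝ) :
    ∫ s in (0 : ℝ)..1, (∑ i, a i * s ^ (i : ℕ)) ^ 2 =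
      ∑ i, ∑ j, a i * a j / ((i : ℕ) + (j : ℕ) + 1 : ℝ) := by
  have hexp (s : ℝ) : (∑ i, a i * s ^ (i : ℕ)) ^ 2 =
      ∑ i, ∑ j, a i * a j * s ^ ((i : ℕ) + (j : ℕ)) := by
    rw [sq, sum_mul_sum]
    exact sum_congr rfl fun i _ => sum_congr rfl fun j _ => by ring
  simp_rw [hexp]
  rw [intervalIntegral.integral_finsetSum fun i _ =>
    (by fun_prop : Continuous _).intervalIntegrable _ _]
  refine sum_congr rfl fun i _ => ?_
  rw [intervalIntegral.integral_finsetSum fun j _ =>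
    (by fun_prop : Continuous _).intervalIntegrable _ _]
  refine sum_congr rfl fun j _ => ?_
  rw [intervalIntegral.integral_const_mul, integral_pow]
  push_cast
  ring

theorem hilbert_form_pos {m : ℕ} {a : Fin m → ℝ} (ha : a ≠ 0) :
    0 < ∑ i, ∑ j, a i * a j / ((i : ℕ) + (j : ℕ) + 1 : ℝ) := by
  set P : Polynomial ℝ := ∑ i, Polynomial.C (a i) * Polynomial.X ^ (i : ℕ)
  have hP : ∀ s, P.eval s = ∑ i, a i * s ^ (i : ℕ) := by simp [P, Polynomial.eval_finsetSum]
  have hP0 : P ≠ 0 := by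
    contrapose! ha
    ext i
    simpa [P, Polynomial.finsetSum_coeff, Polynomial.coeff_X_pow, Fin.val_inj] using
      congrArg (Polynomial.coeff · i) ha
  obtain ⟨s, hs, hPs⟩ : ∃ s ∈ Set.Icc (0 : ℝ) 1, P.eval s ≠ 0 := by
    by_contra! h
    exact hP0 (P.eq_zero_of_infinite_isRoot ((Set.Icc_infinite zero_lt_one).mono h))
  rw [← integral_sq_sum_mul_pow]
  simp_rw [← hP]
  exact intervalIntegral.integral_pos zero_lt_one (P.continuous.pow 2).continuousOn
    (fun _ _ => sq_nonneg _) ⟨s, hs, by positivity⟩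

theorem exists_pos_mul_sum_sq_le_hilbert (m : ℕ) :
    ∃ μ > 0, ∀ a : ℕ → ℝ, μ * ∑ i ∈ range m, a i ^ 2 ≤
      ∑ i ∈ range m, ∑ j ∈ range m, a i * a j / (i + j + 1) := by
  obtain ⟨μ, hμ, h⟩ := exists_pos_mul_sum_sq_le
    (fun a : Fin m → ℝ => ∑ i, ∑ j, a i * a j / ((i : ℕ) + (j : ℕ) + 1 : ℝ))
    (by fun_prop)
    (fun c a => by
      simp only [Pi.smul_apply, smul_eq_mul, mul_sum]
      exact sum_congr rfl fun i _ => sum_congr rfl fun j _ => by ring)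
    (fun a ha => hilbert_form_pos ha)
  refine ⟨μ, hμ, fun a => ?_⟩
  simpa only [Finset.sum_range] using h (fun i => a i)

noncomputable def stlogCoeff (T : ℝ) (i j : ℕ) : ℝ :=
  T ^ (i + j + 1) / (((i + j + 1) * i ! * j ! : ℕ) : ℝ)

noncomputable def stlog {m n : Type*} [Fintype m] (A : ℕ → Matrix m n ℝ) (r : ℕ) (T : ℝ) :
    Matrix n n ℝ :=
  ∑ i ∈ range (r + 1), ∑ j ∈ range (r + 1), stlogCoeff T i j • ((A i)ᵀ * A j)

noncomputable def stlogForm {ι : Type*} [Fintype ι] (r : ℕ) (T : ℝ) (e : ℕ → ι → ℝ) : ℝ :=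
  ∑ i ∈ range (r + 1), ∑ j ∈ range (r + 1), stlogCoeff T i j * (e i ⬝ᵥ e j)

theorem dotProduct_stlog_mulVec {m n : Type*} [Fintype m] [Fintype n] (A : ℕ → Matrix m n ℝ)
    (r : ℕ) (T : ℝ) (w : n → ℝ) :
    w ⬝ᵥ stlog A r T *ᵥ w = stlogForm r T (fun k => A k *ᵥ w) := by
  simp only [stlog, stlogForm, sum_mulVec, dotProduct_sum, smul_mulVec, dotProduct_smul,
    smul_eq_mul, ← mulVec_mulVec, dotProduct_mulVec, vecMul_transpose]

theorem stlogCoeff_nonneg {T : ℝ} (hT : 0 ≤ T) (i j : ℕ) : 0 ≤ stlogCoeff T i j := by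
  unfold stlogCoeff; positivity

theorem stlogCoeff_eq_pow_mul (T : ℝ) (i j : ℕ) :
    stlogCoeff T i j = T ^ (i + j + 1) * stlogCoeff 1 i j := by
  simp only [stlogCoeff, one_pow, mul_one_div]

theorem stlogCoeff_eq_hilbert (T : ℝ) (i j : ℕ) :
    stlogCoeff T i j = T * ((T ^ i / i !) * (T ^ j / j !) / (i + j + 1)) := by
  have : ((i : ℝ) + j + 1) ≠ 0 := by positivity
  simp only [stlogCoeff, pow_add, pow_one]
  push_cast
  field_simp

theorem mul_sum_sq_le_stlogForm {ι : Type*} [Fintype ι] {r : ℕ} {μ T : ℝ}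
    (hμ : ∀ a : ℕ → ℝ, μ * ∑ i ∈ range (r + 1), a i ^ 2 ≤
      ∑ i ∈ range (r + 1), ∑ j ∈ range (r + 1), a i * a j / (i + j + 1))
    (hT : 0 ≤ T) (e : ℕ → ι → ℝ) :
    T * μ * ∑ i ∈ range (r + 1), (T ^ i / i !) ^ 2 * (e i ⬝ᵥ e i) ≤ stlogForm r T e := by
  let a (x : ι) (i : ℕ) : ℝ := T ^ i / i ! * e i x
  calc T * μ * ∑ i ∈ range (r + 1), (T ^ i / i !) ^ 2 * (e i ⬝ᵥ e i)
      = ∑ x, T * (μ * ∑ i ∈ range (r + 1), a x i ^ 2) := by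
        simp only [a, dotProduct, mul_sum]
        rw [sum_comm]
        exact sum_congr rfl fun x _ => sum_congr rfl fun i _ => by ring
    _ ≤ ∑ x, T * ∑ i ∈ range (r + 1), ∑ j ∈ range (r + 1), a x i * a x j / (i + j + 1) := by
        gcongr with x; exact hμ _
    _ = stlogForm r T e := by
        simp only [stlogForm, stlogCoeff_eq_hilbert, a, dotProduct, mul_sum]
        rw [sum_comm]
        refine sum_congr rfl fun i _ => ?_
        rw [sum_comm]
        exact sum_congr rfl fun j _ => sum_congr rfl fun x _ => by ring

theorem pow_div_factorial_le {T : ℝ} (hT0 : 0 ≤ T) (hT1 : T ≤ 1) {i k : ℕ} (hik : i ≤ k) :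
    T ^ k / k ! ≤ T ^ i / i ! :=
  div_le_div₀ (by positivity) (pow_le_pow_of_le_one hT0 hT1 hik) (by positivity)
    (by exact_mod_cast Nat.factorial_le hik)

theorem mul_sum_sq_le_stlogForm_of_le {ι : Type*} [Fintype ι] {r k : ℕ} (hk : k ≤ r) {μ T : ℝ}
    (hμ0 : 0 ≤ μ) (hμ : ∀ a : ℕ → ℝ, μ * ∑ i ∈ range (r + 1), a i ^ 2 ≤
      ∑ i ∈ range (r + 1), ∑ j ∈ range (r + 1), a i * a j / (i + j + 1))
    (hT0 : 0 ≤ T) (hT1 : T ≤ 1) (e : ℕ → ι → ℝ) :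
    T * μ * (T ^ k / k !) ^ 2 * ∑ i ∈ range (k + 1), e i ⬝ᵥ e i ≤ stlogForm r T e := by
  refine le_trans ?_ (mul_sum_sq_le_stlogForm hμ hT0 e)
  rw [mul_assoc, mul_sum]
  gcongr
  calc ∑ i ∈ range (k + 1), (T ^ k / k !) ^ 2 * (e i ⬝ᵥ e i)
      ≤ ∑ i ∈ range (k + 1), (T ^ i / i !) ^ 2 * (e i ⬝ᵥ e i) := by
        refine sum_le_sum fun i hi => mul_le_mul_of_nonneg_right ?_ (dotProduct_self_star_nonneg _)
        exact pow_le_pow_left₀ (by positivity)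
          (pow_div_factorial_le hT0 hT1 (Nat.lt_succ_iff.1 (mem_range.1 hi))) 2
    _ ≤ ∑ i ∈ range (r + 1), (T ^ i / i !) ^ 2 * (e i ⬝ᵥ e i) :=
        sum_le_sum_of_subset_of_nonneg (range_subset_range.2 (by omega))
          fun i _ _ => mul_nonneg (sq_nonneg _) (dotProduct_self_star_nonneg _)

theorem stlogForm_le_pow_mul {ι : Type*} [Fintype ι] {r k : ℕ} {T : ℝ} (hT0 : 0 ≤ T)
    (hT1 : T ≤ 1) {e : ℕ → ι → ℝ} (he : ∀ i < k, e i = 0) :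
    stlogForm r T e ≤ T ^ (2 * k + 1) *
      ∑ i ∈ range (r + 1), ∑ j ∈ range (r + 1), stlogCoeff 1 i j * |e i ⬝ᵥ e j| := by
  rw [stlogForm, mul_sum]
  refine sum_le_sum fun i _ => ?_
  rw [mul_sum]
  refine sum_le_sum fun j _ => ?_
  rcases lt_or_ge i k with hi | hi
  · simp [he i hi]
  rcases lt_or_ge j k with hj | hj
  · simp [he j hj]
  have hcoeff := stlogCoeff_nonneg zero_le_one i j
  rw [stlogCoeff_eq_pow_mul, mul_assoc]
  calc T ^ (i + j + 1) * (stlogCoeff 1 i j * (e i ⬝ᵥ e j))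
      ≤ T ^ (i + j + 1) * (stlogCoeff 1 i j * |e i ⬝ᵥ e j|) := by gcongr; exact le_abs_self _
    _ ≤ T ^ (2 * k + 1) * (stlogCoeff 1 i j * |e i ⬝ᵥ e j|) :=
        mul_le_mul_of_nonneg_right (pow_le_pow_of_le_one hT0 hT1 (by omega)) (by positivity)

theorem stmt9_general {p n : ℕ} (r rs : ℕ) (hr : rs ≤ r)
    (A : ℕ → Matrix (Fin p) (Fin n) ℝ)
    (Ors : Matrix (Fin (rs + 1) × Fin p) (Fin n) ℝ)
    (hOrs : ∀ k i j, Ors (k, i) j = A k i j)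
    (Ors1 : Matrix (Fin rs × Fin p) (Fin n) ℝ)
    (hOrs1 : ∀ k i j, Ors1 (k, i) j = A k i j)
    (hfull : Ors.rank = n)
    (hnotfull : Ors1.rank ≠ n)
    (W : ℝ → Matrix (Fin n) (Fin n) ℝ)
    (hW : ∀ T : ℝ, W T = ∑ i ∈ Finset.range (r + 1), ∑ j ∈ Finset.range (r + 1),
      (T ^ (i + j + 1) /
        (((i + j + 1) * Nat.factorial i * Nat.factorial j : ℕ) : ℝ)) • ((A i)ᵀ * A j)) :
    ∃ C₁ C₂ : ℝ, 0 < C₁ ∧ C₁ ≤ C₂ ∧ ∃ δ > (0 : ℝ), ∀ T : ℝ, 0 < T → T < δ →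
      C₁ * T ^ (2 * rs + 1) ≤ lambdaMin (W T) ∧
      lambdaMin (W T) ≤ C₂ * T ^ (2 * rs + 1) := by
  obtain rfl : W = stlog A r := funext hW
  obtain ⟨c, hc, hcoer⟩ :=
    exists_pos_mul_sum_sq_le_sum_of_stack_rank_eq hOrs (by rw [Fintype.card_fin, hfull])
  obtain ⟨u, hu, hAu⟩ :=
    exists_sum_sq_eq_one_and_mulVec_eq_zero_of_stack_rank_ne hOrs1 (by rwa [Fintype.card_fin])
  obtain ⟨μ, hμ, hhil⟩ := exists_pos_mul_sum_sq_le_hilbert (r + 1)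
  set C₁ := μ * c / rs ! ^ 2
  set B := ∑ i ∈ range (r + 1), ∑ j ∈ range (r + 1), stlogCoeff 1 i j * |A i *ᵥ u ⬝ᵥ A j *ᵥ u|
  refine ⟨C₁, max C₁ B, by positivity, le_max_left _ _, 1, one_pos, fun T hT0 hT1 => ?_⟩
  have hlower (w : Fin n → ℝ) (hw : ∑ i, w i ^ 2 = 1) :
      C₁ * T ^ (2 * rs + 1) ≤ w ⬝ᵥ stlog A r T *ᵥ w := by
    rw [dotProduct_stlog_mulVec]
    refine le_trans ?_ (mul_sum_sq_le_stlogForm_of_le hr hμ.le hhil hT0.le hT1.le _)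
    calc C₁ * T ^ (2 * rs + 1) = T * μ * (T ^ rs / rs !) ^ 2 * (c * ∑ i, w i ^ 2) := by
          rw [hw]; simp only [C₁]; field_simp; ring
      _ ≤ _ := by gcongr; exact hcoer w
  obtain ⟨hlow, hup⟩ := lambdaMin_bounds hlower hu
  refine ⟨hlow, hup.trans ?_⟩
  rw [dotProduct_stlog_mulVec]
  calc _ ≤ T ^ (2 * rs + 1) * B := stlogForm_le_pow_mul hT0.le hT1.le hAu
    _ ≤ max C₁ B * T ^ (2 * rs + 1) := by rw [mul_comm]; gcongr; exact le_max_right _ _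

theorem stmt9 {p n : ℕ} (r rs : ℕ) (hrs : 1 ≤ rs) (hr : rs ≤ r)
    (A : ℕ → Matrix (Fin p) (Fin n) ℝ)
    (Ors : Matrix (Fin (rs + 1) × Fin p) (Fin n) ℝ)
    (hOrs : ∀ k i j, Ors (k, i) j = A k i j)
    (Ors1 : Matrix (Fin rs × Fin p) (Fin n) ℝ)
    (hOrs1 : ∀ k i j, Ors1 (k, i) j = A k i j)
    (hfull : Ors.rank = n)
    (hnotfull : Ors1.rank ≠ n)
    (W : ℝ → Matrix (Fin n) (Fin n) ℝ)
    (hW : ∀ T : ℝ, W T = ∑ i ∈ Finset.range (r + 1), ∑ j ∈ Finset.range (r + 1),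
      (T ^ (i + j + 1) /
        (((i + j + 1) * Nat.factorial i * Nat.factorial j : ℕ) : ℝ)) • ((A i)ᵀ * A j)) :
    ∃ C₁ C₂ : ℝ, 0 < C₁ ∧ C₁ ≤ C₂ ∧ ∃ δ > (0 : ℝ), ∀ T : ℝ, 0 < T → T < δ →
      C₁ * T ^ (2 * rs + 1) ≤ lambdaMin (W T) ∧
      lambdaMin (W T) ≤ C₂ * T ^ (2 * rs + 1) :=
  stmt9_general r rs hr A Ors hOrs Ors1 hOrs1 hfull hnotfull W hW
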